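/- arXiv:2103.00697 — 3 statements merged into one kernel-verified Lean document; each statement's English description precedes it below -/
import Mathlib

section
/- Let A be an n×d real matrix and C be an n×d matrix whose i-th row is the mean of the rows of A belonging to the cluster containing row i. For any subset S of the rows of a cluster T_r, the Euclidean distance between the mean of the rows in S and the mean of the rows in T_r is at most ‖A−C‖_op / √|S|, where ‖·‖_op denotes the spectral (operator) norm. -/
/-!
Let `1_S ∈ ℝⁿ` be the indicator vector of `S`, so `‖1_S‖ = √|S|`. Since every row of `C` indexed
by `S` equals `μ(T_r)`, `(A - C)ᵀ 1_S = ∑_{i ∈ S} (A_i - μ(T_r)) = |S| (μ(S) - μ(T_r))`, hence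
`|S| ‖μ(S) - μ(T_r)‖ ≤ ‖(A - C)ᵀ‖ √|S| = ‖A - C‖ √|S|`.
-/

/-- The ℓ2 (spectral) operator norm of a matrix. -/
noncomputable def opNorm {n d : ℕ} (M : Matrix (Fin n) (Fin d) ℝ) : ℝ :=
  ‖LinearMap.toContinuousLinearMap (Matrix.toEuclideanLin M)‖

/-- Mean of the rows of `A` indexed by `S`, as a point of Euclidean space. -/
noncomputable def clMean {n d : ℕ} (A : Matrix (Fin n) (Fin d) ℝ) (S : Finset (Fin n)) :
    EuclideanSpace ℝ (Fin d) :=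
  (S.card : ℝ)⁻¹ • ∑ i ∈ S, (WithLp.equiv 2 (Fin d → ℝ)).symm (A i)

/-- The cluster (as a `Finset`) of label `r` under the cluster assignment `c`. -/
def cluster {n k : ℕ} (c : Fin n → Fin k) (r : Fin k) : Finset (Fin n) :=
  Finset.univ.filter (fun j => c j = r)

open scoped Matrix.Norms.L2Operator

lemma EuclideanSpace.norm_toLp_indicator_one {m : Type*} [Fintype m] (S : Finset m) :
    ‖WithLp.toLp 2 ((S : Set m).indicator (1 : m → ℝ))‖ = √S.card := by
  classical
  rw [EuclideanSpace.norm_eq]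
  congr 1
  simp [Set.indicator_apply]

namespace Matrix

variable {m n : Type*} [Fintype m] [Fintype n] [DecidableEq m] [DecidableEq n]

lemma l2_opNorm_transpose (A : Matrix m n ℝ) : ‖Aᵀ‖ = ‖A‖ := by
  rw [← conjTranspose_eq_transpose_of_trivial, l2_opNorm_conjTranspose]

lemma norm_sum_rows_le (A : Matrix m n ℝ) (S : Finset m) :
    ‖∑ i ∈ S, WithLp.toLp 2 (A i)‖ ≤ ‖A‖ * √S.card := by
  have hsum : ∑ i ∈ S, WithLp.toLp 2 (A i) =
      (EuclideanSpace.equiv n ℝ).symm (Aᵀ *ᵥ (S : Set m).indicator 1) := by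
    rw [mulVec_transpose, vecMul_eq_sum]
    simp [Set.indicator_apply, apply_ite (WithLp.toLp 2), Finset.sum_ite_mem]
  rw [hsum, ← l2_opNorm_transpose, ← EuclideanSpace.norm_toLp_indicator_one]
  exact l2_opNorm_mulVec Aᵀ (WithLp.toLp 2 ((S : Set m).indicator 1))

end Matrix

lemma opNorm_eq_l2_opNorm {n d : ℕ} (M : Matrix (Fin n) (Fin d) ℝ) : opNorm M = ‖M‖ := rfl

lemma sum_rows_sub_eq_card_smul_clMean_sub {n d : ℕ} (A C : Matrix (Fin n) (Fin d) ℝ)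
    (S : Finset (Fin n)) (hS : S.Nonempty) (v : EuclideanSpace ℝ (Fin d))
    (hC : ∀ i ∈ S, WithLp.toLp 2 (C i) = v) :
    ∑ i ∈ S, WithLp.toLp 2 ((A - C) i) = (S.card : ℝ) • (clMean A S - v) := by
  have hcard : (S.card : ℝ) ≠ 0 := by exact_mod_cast hS.card_pos.ne'
  rw [clMean, smul_sub, smul_inv_smul₀ hcard, Nat.cast_smul_eq_nsmul, ← Finset.sum_const,
    ← Finset.sum_sub_distrib]
  refine Finset.sum_congr rfl fun i hi => ?_
  rw [← hC i hi]
  rfl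

theorem mean_shift {n d k : ℕ} (A C : Matrix (Fin n) (Fin d) ℝ) (c : Fin n → Fin k)
    (hC : ∀ i, (WithLp.equiv 2 (Fin d → ℝ)).symm (C i) = clMean A (cluster c (c i)))
    (r : Fin k) (S : Finset (Fin n)) (hS : S ⊆ cluster c r) (hne : S.Nonempty) :
    ‖clMean A S - clMean A (cluster c r)‖ ≤ opNorm (A - C) / Real.sqrt S.card := by
  have hsqrt : 0 < √(S.card : ℝ) := Real.sqrt_pos.mpr (by exact_mod_cast hne.card_pos)
  have hrows : ∀ i ∈ S, WithLp.toLp 2 (C i) = clMean A (cluster c r) := fun i hi => by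
    rw [← (Finset.mem_filter.mp (hS hi)).2]
    exact hC i
  have hbound := (A - C).norm_sum_rows_le S
  rw [sum_rows_sub_eq_card_smul_clMean_sub A C S hne _ hrows, norm_smul, Real.norm_natCast,
    ← opNorm_eq_l2_opNorm] at hbound
  rw [le_div_iff₀ hsqrt, ← mul_le_mul_iff_of_pos_left hsqrt]
  calc √(S.card : ℝ) * (‖clMean A S - clMean A (cluster c r)‖ * √(S.card : ℝ))
      = S.card * ‖clMean A S - clMean A (cluster c r)‖ := by
        rw [mul_comm, mul_assoc, Real.mul_self_sqrt (Nat.cast_nonneg _), mul_comm]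
    _ ≤ opNorm (A - C) * √(S.card : ℝ) := hbound
    _ = √(S.card : ℝ) * opNorm (A - C) := mul_comm _ _
end

section
/- Let A^(z) be a submatrix of A consisting of a subset of rows, and let C^(z) (resp. C̃^(z)) be the corresponding matrices of local cluster means (resp. global cluster means restricted to these rows). If at most k' local clusters are nonempty, then ‖C̃^(z) − C^(z)‖_op² ≤ ∑_{r=1}^{k} |T_r^(z)| · ‖μ(T_r^(z)) − μ(T_r)‖₂², and consequently ‖C̃^(z) − C^(z)‖_op ≤ √(k') · ‖A − C‖_op. -/
/-- Local cluster on a device whose rows are selected by the embedding `e`. -/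
def localCluster {n m k : ℕ} (c : Fin n → Fin k) (e : Fin m ↪ Fin n) (r : Fin k) :
    Finset (Fin m) :=
  Finset.univ.filter (fun i => c (e i) = r)

/-
Row `i` of `C̃ - C` is `μ(T_r) - μ(T_r^(z))` with `r = c(i)`, so bounding the spectral norm by the
Frobenius norm and grouping the rows by cluster gives the weighted sum. In that sum,
`μ(T_r^(z)) - μ(T_r)` is `|T_r^(z)|⁻¹` times the sum of the rows of `A - C` over `T_r^(z)`, i.e.
`(A - C)ᵀ` applied to the indicator of `T_r^(z)`, a vector of norm `√|T_r^(z)|`; hence each of the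
at most `k'` nonzero summands is at most `‖A - C‖²`.
-/

open scoped Matrix.Norms.L2Operator

namespace Matrix

variable {m n : Type*} [Fintype m] [Fintype n] [DecidableEq n]

lemma l2_opNorm_sq_le_sum_row_norm_sq (M : Matrix m n ℝ) :
    ‖M‖ ^ 2 ≤ ∑ i, ‖WithLp.toLp 2 (M i)‖ ^ 2 := by
  set S := ∑ i, ‖WithLp.toLp 2 (M i)‖ ^ 2
  have hS : 0 ≤ S := by positivity
  suffices ‖M‖ ≤ √S from (Real.le_sqrt (norm_nonneg _) hS).mp this
  refine ContinuousLinearMap.opNorm_le_bound _ (Real.sqrt_nonneg S) fun x => ?_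
  rw [← Real.sqrt_sq (norm_nonneg x), ← Real.sqrt_mul hS,
    Real.le_sqrt (norm_nonneg _) (by positivity)]
  have hrow : ∀ i, ‖(M *ᵥ x.ofLp) i‖ ≤ ‖WithLp.toLp 2 (M i)‖ * ‖x‖ := fun i => by
    simpa [EuclideanSpace.inner_eq_star_dotProduct, mulVec, dotProduct_comm] using
      norm_inner_le_norm (𝕜 := ℝ) (WithLp.toLp 2 (M i)) x
  calc ‖toEuclideanLin M x‖ ^ 2 = ∑ i, ‖(M *ᵥ x.ofLp) i‖ ^ 2 := EuclideanSpace.norm_sq_eq _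
    _ ≤ ∑ i, (‖WithLp.toLp 2 (M i)‖ * ‖x‖) ^ 2 := by gcongr with i; exact hrow i
    _ = S * ‖x‖ ^ 2 := by simp only [mul_pow, Finset.sum_mul, S]

lemma l2_opNorm_sq_le_sum_card_fiber_mul {κ : Type*} [Fintype κ] [DecidableEq κ]
    (M : Matrix m n ℝ) (ℓ : m → κ) (g : κ → EuclideanSpace ℝ n)
    (hM : ∀ i, WithLp.toLp 2 (M i) = g (ℓ i)) :
    ‖M‖ ^ 2 ≤ ∑ r, (Finset.univ.filter fun i => ℓ i = r).card * ‖g r‖ ^ 2 := by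
  calc ‖M‖ ^ 2 ≤ ∑ i, ‖g (ℓ i)‖ ^ 2 := by
        simpa only [hM] using l2_opNorm_sq_le_sum_row_norm_sq M
    _ = ∑ r, ∑ i with ℓ i = r, ‖g r‖ ^ 2 := (Finset.sum_fiberwise' _ ℓ fun r => ‖g r‖ ^ 2).symm
    _ = _ := by simp only [Finset.sum_const, nsmul_eq_mul]

variable [DecidableEq m]

lemma l2_opNorm_vecMul (M : Matrix m n ℝ) (v : EuclideanSpace ℝ m) :
    ‖WithLp.toLp 2 (v.ofLp ᵥ* M)‖ ≤ ‖M‖ * ‖v‖ := by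
  rw [← mulVec_transpose, ← conjTranspose_eq_transpose_of_trivial, ← l2_opNorm_conjTranspose M]
  exact l2_opNorm_mulVec Mᴴ v

lemma norm_sum_row_sq_le (M : Matrix m n ℝ) (T : Finset m) :
    ‖∑ i ∈ T, WithLp.toLp 2 (M i)‖ ^ 2 ≤ T.card * ‖M‖ ^ 2 := by
  set v : EuclideanSpace ℝ m := WithLp.toLp 2 fun i => if i ∈ T then 1 else 0
  have hsum : ∑ i ∈ T, WithLp.toLp 2 (M i) = WithLp.toLp 2 (v.ofLp ᵥ* M) := by
    ext j
    simp only [WithLp.ofLp_sum, vecMul, dotProduct, ite_mul, one_mul, zero_mul, Finset.sum_ite_mem,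
      Finset.univ_inter, v]
    exact Finset.sum_apply j T M
  have hv : ‖v‖ ^ 2 = T.card := by
    simp [v, EuclideanSpace.norm_sq_eq]
  calc ‖∑ i ∈ T, WithLp.toLp 2 (M i)‖ ^ 2 ≤ (‖M‖ * ‖v‖) ^ 2 := by
        rw [hsum]; gcongr; exact l2_opNorm_vecMul M v
    _ = T.card * ‖M‖ ^ 2 := by rw [mul_pow, hv, mul_comm]

end Matrix

lemma clMean_submatrix {n m d : ℕ} (A : Matrix (Fin n) (Fin d) ℝ) (e : Fin m ↪ Fin n)
    (S : Finset (Fin m)) : clMean (A.submatrix e id) S = clMean A (S.map e) := by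
  simp only [clMean, Finset.card_map, Finset.sum_map]
  rfl

lemma card_mul_norm_clMean_sub_sq_le {n d : ℕ} (A C : Matrix (Fin n) (Fin d) ℝ)
    (T : Finset (Fin n)) (v : EuclideanSpace ℝ (Fin d)) (hC : ∀ i ∈ T, WithLp.toLp 2 (C i) = v) :
    T.card * ‖clMean A T - v‖ ^ 2 ≤ opNorm (A - C) ^ 2 := by
  rw [opNorm_eq_l2_opNorm]
  rcases T.eq_empty_or_nonempty with rfl | hT
  · simp
  have hcard : (T.card : ℝ) ≠ 0 := by positivity
  have hshift : clMean A T - v = (T.card : ℝ)⁻¹ • ∑ i ∈ T, WithLp.toLp 2 ((A - C) i) := by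
    have hsum : ∑ i ∈ T, WithLp.toLp 2 ((A - C) i) = ∑ i ∈ T, WithLp.toLp 2 (A i) - T.card • v := by
      rw [← Finset.sum_const, ← Finset.sum_sub_distrib]
      exact Finset.sum_congr rfl fun i hi => by rw [← hC i hi]; rfl
    rw [hsum, smul_sub, ← Nat.cast_smul_eq_nsmul ℝ, inv_smul_smul₀ hcard]
    rfl
  calc T.card * ‖clMean A T - v‖ ^ 2
      = (T.card : ℝ)⁻¹ * ‖∑ i ∈ T, WithLp.toLp 2 ((A - C) i)‖ ^ 2 := by
        rw [hshift, norm_smul, mul_pow, norm_inv, Real.norm_natCast]; field_simp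
    _ ≤ (T.card : ℝ)⁻¹ * (T.card * ‖A - C‖ ^ 2) := by
        gcongr; exact Matrix.norm_sum_row_sq_le _ T
    _ = ‖A - C‖ ^ 2 := by field_simp

lemma opNorm_sub_sq_le_sum_card_localCluster_mul {n m d k : ℕ} (A : Matrix (Fin n) (Fin d) ℝ)
    (c : Fin n → Fin k) (e : Fin m ↪ Fin n) (Ct Cz : Matrix (Fin m) (Fin d) ℝ)
    (hCt : ∀ i, WithLp.toLp 2 (Ct i) = clMean A (cluster c (c (e i))))
    (hCz : ∀ i, WithLp.toLp 2 (Cz i) = clMean (A.submatrix e id) (localCluster c e (c (e i)))) :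
    opNorm (Ct - Cz) ^ 2
      ≤ ∑ r, (localCluster c e r).card *
          ‖clMean (A.submatrix e id) (localCluster c e r) - clMean A (cluster c r)‖ ^ 2 := by
  simp only [opNorm_eq_l2_opNorm, norm_sub_rev (clMean (A.submatrix e id) _)]
  refine Matrix.l2_opNorm_sq_le_sum_card_fiber_mul _ (fun i => c (e i)) _ fun i => ?_
  change WithLp.toLp 2 (Ct i - Cz i) = _
  rw [WithLp.toLp_sub, hCt, hCz]

lemma sum_card_localCluster_mul_le {n m d k : ℕ} (A C : Matrix (Fin n) (Fin d) ℝ)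
    (c : Fin n → Fin k) (e : Fin m ↪ Fin n)
    (hC : ∀ i, WithLp.toLp 2 (C i) = clMean A (cluster c (c i))) :
    ∑ r, (localCluster c e r).card *
        ‖clMean (A.submatrix e id) (localCluster c e r) - clMean A (cluster c r)‖ ^ 2
      ≤ (Finset.univ.filter fun r => (localCluster c e r).Nonempty).card * opNorm (A - C) ^ 2 := by
  have hterm : ∀ r, (localCluster c e r).card *
      ‖clMean (A.submatrix e id) (localCluster c e r) - clMean A (cluster c r)‖ ^ 2
        ≤ opNorm (A - C) ^ 2 := fun r => by
    rw [clMean_submatrix, ← Finset.card_map e]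
    refine card_mul_norm_clMean_sub_sq_le A C _ _ fun i hi => ?_
    obtain ⟨j, hj, rfl⟩ := Finset.mem_map.mp hi
    rw [hC, (Finset.mem_filter.mp hj).2]
  rw [← Finset.sum_filter_of_ne (p := fun r => (localCluster c e r).Nonempty) fun r _ h =>
      Finset.nonempty_iff_ne_empty.mpr fun hr => h (by simp [hr]),
    ← nsmul_eq_mul, ← Finset.sum_const]
  exact Finset.sum_le_sum fun r _ => hterm r

theorem localMeans_opNorm_bound {n m d k k' : ℕ} (A C : Matrix (Fin n) (Fin d) ℝ)
    (c : Fin n → Fin k) (e : Fin m ↪ Fin n)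
    (Ct Cz : Matrix (Fin m) (Fin d) ℝ)
    (hC : ∀ i, (WithLp.equiv 2 (Fin d → ℝ)).symm (C i) = clMean A (cluster c (c i)))
    (hCt : ∀ i, (WithLp.equiv 2 (Fin d → ℝ)).symm (Ct i) = clMean A (cluster c (c (e i))))
    (hCz : ∀ i, (WithLp.equiv 2 (Fin d → ℝ)).symm (Cz i)
        = clMean (A.submatrix ⇑e id) (localCluster c e (c (e i))))
    (hk' : (Finset.univ.filter fun r => (localCluster c e r).Nonempty).card ≤ k') :
    opNorm (Ct - Cz) ^ 2
        ≤ ∑ r : Fin k, ((localCluster c e r).card : ℝ) *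
            ‖clMean (A.submatrix ⇑e id) (localCluster c e r) - clMean A (cluster c r)‖ ^ 2 ∧
      opNorm (Ct - Cz) ≤ Real.sqrt k' * opNorm (A - C) := by
  have hweighted := opNorm_sub_sq_le_sum_card_localCluster_mul A c e Ct Cz hCt hCz
  refine ⟨hweighted, ?_⟩
  have hsq : opNorm (Ct - Cz) ^ 2 ≤ (Real.sqrt k' * opNorm (A - C)) ^ 2 := by
    rw [mul_pow, Real.sq_sqrt k'.cast_nonneg]
    calc opNorm (Ct - Cz) ^ 2 ≤ _ := hweighted
      _ ≤ _ := sum_card_localCluster_mul_le A C c e hC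
      _ ≤ k' * opNorm (A - C) ^ 2 := by gcongr
  simp only [opNorm_eq_l2_opNorm] at hsq ⊢
  exact (pow_le_pow_iff_left₀ (norm_nonneg _)
    (mul_nonneg (Real.sqrt_nonneg _) (norm_nonneg _)) two_ne_zero).mp hsq
end

section
/- Let λ > 0 and m₀ ≥ 1. Suppose points {θ_r^(z)} in ℝ^d are labeled by clusters r ∈ {1,…,k} such that any two points with the same label are within distance 4√m₀·λ of each other, and any two points with different labels are at distance at least 6√m₀·λ. Then a farthest-point-first traversal starting from any one point and greedily adding the point farthest from the current set, until k points are selected, selects exactly one point from each of the k labels. -/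
open Metric in
/-- Farthest-point-first traversal over a labeled family of points: if same-label
points are within `4√m₀·λ` and differently-labeled points are at least `6√m₀·λ`
apart, the greedy sequence of `k` points hits every label exactly once. -/
theorem farthest_point_first_hits_every_label {d k : ℕ} {ι : Type*} [Fintype ι]
    (θ : ι → EuclideanSpace ℝ (Fin d)) (lab : ι → Fin k)
    (lam m₀ : ℝ) (hlam : 0 < lam) (hm₀ : 1 ≤ m₀)
    (hsame : ∀ i j, lab i = lab j → ‖θ i - θ j‖ ≤ 4 * Real.sqrt m₀ * lam)
    (hdiff : ∀ i j, lab i ≠ lab j → ‖θ i - θ j‖ ≥ 6 * Real.sqrt m₀ * lam)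
    (hfull : ∀ r : Fin k, ∃ i, lab i = r)
    (p : Fin k → ι)
    (hgreedy : ∀ t : Fin k, ∀ i : ι,
        infDist (θ i) (θ '' (p '' {s : Fin k | s < t}))
          ≤ infDist (θ (p t)) (θ '' (p '' {s : Fin k | s < t}))) :
    Function.Bijective (fun t => lab (p t)) := by
  have hsq : (1:ℝ) ≤ Real.sqrt m₀ := by
    have := Real.sqrt_le_sqrt hm₀
    simpa using this
  have hlt : 4 * Real.sqrt m₀ * lam < 6 * Real.sqrt m₀ * lam := by
    have : (0:ℝ) < Real.sqrt m₀ * lam := by positivity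
    nlinarith
  have key : ∀ t : Fin k, ∀ s : Fin k, s < t → lab (p s) ≠ lab (p t) := by
    intro t
    induction t using WellFoundedLT.induction with
    | _ t IH =>
      intro s hst heq
      set S := Finset.image (fun s : Fin k => lab (p s))
        (Finset.univ.filter (fun s : Fin k => s < t)) with hS
      have hcard : S.card < k := by
        have h1 : S.card ≤ (Finset.univ.filter (fun s : Fin k => s < t)).card :=
          Finset.card_image_le
        have h2 : (Finset.univ.filter (fun s : Fin k => s < t)).card < k := by
          have hne : (Finset.univ.filter (fun s : Fin k => s < t)) ≠ Finset.univ := by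
            intro h
            have : t ∈ Finset.univ.filter (fun s : Fin k => s < t) := by
              rw [h]; exact Finset.mem_univ t
            simp at this
          have := Finset.card_lt_iff_ne_univ (s := Finset.univ.filter (fun s : Fin k => s < t))
          simpa [Fintype.card_fin] using this.mpr hne
        exact lt_of_le_of_lt h1 h2
      obtain ⟨r, hr⟩ : ∃ r : Fin k, r ∉ S := by
        by_contra h
        push_neg at h
        have := Finset.eq_univ_iff_forall.mpr h
        rw [this] at hcard
        simp [Fintype.card_fin] at hcard
      obtain ⟨i, hi⟩ := hfull r
      set T : Set (EuclideanSpace ℝ (Fin d)) := θ '' (p '' {s : Fin k | s < t}) with hT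
      have hmem : θ (p s) ∈ T := ⟨p s, ⟨s, hst, rfl⟩, rfl⟩
      have hTne : T.Nonempty := ⟨_, hmem⟩
      have hub : infDist (θ (p t)) T ≤ 4 * Real.sqrt m₀ * lam := by
        have h1 : infDist (θ (p t)) T ≤ dist (θ (p t)) (θ (p s)) :=
          infDist_le_dist_of_mem hmem
        have h2 : dist (θ (p t)) (θ (p s)) ≤ 4 * Real.sqrt m₀ * lam := by
          rw [dist_eq_norm]
          exact hsame _ _ heq.symm
        linarith
      have hlb : 6 * Real.sqrt m₀ * lam ≤ infDist (θ i) T := by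
        by_contra hcon
        push_neg at hcon
        obtain ⟨y, hy, hylt⟩ := (infDist_lt_iff hTne).mp hcon
        obtain ⟨x, ⟨s', hs', rfl⟩, rfl⟩ := hy
        have hmemS : lab (p s') ∈ S := by
          apply Finset.mem_image_of_mem
          simpa using hs'
        have hne : lab i ≠ lab (p s') := by
          rw [hi]
          intro h
          exact hr (h ▸ hmemS)
        have := hdiff i (p s') hne
        rw [dist_eq_norm] at hylt
        linarith
      have := hgreedy t i
      rw [← hT] at this
      linarith
  have hinj : Function.Injective (fun t => lab (p t)) := by
    intro a b hab
    by_contra hne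
    rcases lt_or_gt_of_ne hne with h | h
    · exact key b a h hab
    · exact key a b h hab.symm
  exact (Finite.injective_iff_bijective).mp hinj
end
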